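/- arXiv:1508.04084 — 2 statements merged into one kernel-verified Lean document; each statement's English description precedes it below -/
import Mathlib

section
/- For all nonnegative integers m and n, ∫_0^1 E_m(x) E_n(x) dx = 2(-1)^{n+1} (m! n! / (m+n+1)!) E_{m+n+1}(0). -/
/-!
Since `E_{k+1}' = (k+1) E_k` and `E_k(1) = -E_k(0)` for `k ≥ 1`, integrating by parts moves a
derivative from one factor to the other without boundary term:
`(m+1) ∫ E_m E_{n+1} = -(n+1) ∫ E_{m+1} E_n`. Iterating this `n` times reduces the integral to
`∫ E_{m+n} = -2 E_{m+n+1}(0) / (m+n+1)`, and the factorials and signs collect into the formula.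
-/

/-- The `n`-th Euler polynomial `E_n(x)`, characterized by the generating function
`2 e^{xz}/(e^z+1) = ∑ E_n(x) z^n/n!`; given by the standard closed form
`E_n(x) = (2^{n+1}/(n+1)) (B_{n+1}((x+1)/2) - B_{n+1}(x/2))` in terms of
Bernoulli polynomials. -/
noncomputable def eulerPoly (n : ℕ) (x : ℝ) : ℝ :=
  2 ^ (n + 1) / (n + 1) *
    (((Polynomial.bernoulli (n + 1)).map (algebraMap ℚ ℝ)).eval ((x + 1) / 2) -
     ((Polynomial.bernoulli (n + 1)).map (algebraMap ℚ ℝ)).eval (x / 2))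

open intervalIntegral

theorem eulerPoly_eq_bernoulliFun (n : ℕ) (x : ℝ) :
    eulerPoly n x =
      2 ^ (n + 1) / (n + 1) * (bernoulliFun (n + 1) ((x + 1) / 2) - bernoulliFun (n + 1) (x / 2)) :=
  rfl

theorem eulerPoly_zero (x : ℝ) : eulerPoly 0 x = 1 := by
  rw [eulerPoly_eq_bernoulliFun, bernoulliFun_one, bernoulliFun_one]
  ring

@[fun_prop]
theorem continuous_eulerPoly (n : ℕ) : Continuous (eulerPoly n) := by
  simp only [funext (eulerPoly_eq_bernoulliFun n)]
  fun_prop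

theorem hasDerivAt_eulerPoly_succ (n : ℕ) (x : ℝ) :
    HasDerivAt (eulerPoly (n + 1)) ((n + 1) * eulerPoly n x) x := by
  have h₁ := (hasDerivAt_bernoulliFun (n + 2) ((x + 1) / 2)).comp x
    (((hasDerivAt_id x).add_const 1).div_const 2)
  have h₂ := (hasDerivAt_bernoulliFun (n + 2) (x / 2)).comp x ((hasDerivAt_id x).div_const 2)
  rw [funext (eulerPoly_eq_bernoulliFun (n + 1))]
  refine ((h₁.sub h₂).const_mul _).congr_deriv ?_
  rw [eulerPoly_eq_bernoulliFun]
  push_cast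
  field_simp
  ring

theorem eulerPoly_one_of_ne_zero {n : ℕ} (hn : n ≠ 0) : eulerPoly n 1 = -eulerPoly n 0 := by
  have h := bernoulliFun_endpoints_eq_of_ne_one (k := n + 1) (by omega)
  -- `E_n(1) + E_n(0)` telescopes to a multiple of `B_{n+1}(1) - B_{n+1}(0)`.
  simp only [eulerPoly_eq_bernoulliFun]
  norm_num [h]
  ring

theorem integral_eulerPoly (n : ℕ) :
    ∫ x in (0 : ℝ)..1, eulerPoly n x = -2 * eulerPoly (n + 1) 0 / (n + 1) := by
  have hF (x : ℝ) : HasDerivAt (fun y => eulerPoly (n + 1) y / (n + 1)) (eulerPoly n x) x := by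
    refine ((hasDerivAt_eulerPoly_succ n x).div_const ((n : ℝ) + 1)).congr_deriv ?_
    rw [mul_div_cancel_left₀ _ n.cast_add_one_ne_zero]
  rw [integral_eq_sub_of_hasDerivAt (fun x _ => hF x)
      (Continuous.intervalIntegrable (by fun_prop) _ _), eulerPoly_one_of_ne_zero n.succ_ne_zero]
  ring

theorem integral_eulerPoly_mul_eulerPoly_succ (m n : ℕ) :
    (m + 1) * ∫ x in (0 : ℝ)..1, eulerPoly m x * eulerPoly (n + 1) x =
      -((n + 1) * ∫ x in (0 : ℝ)..1, eulerPoly (m + 1) x * eulerPoly n x) := by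
  have h := integral_deriv_mul_eq_sub (a := 0) (b := 1)
    (fun x _ => hasDerivAt_eulerPoly_succ m x) (fun x _ => hasDerivAt_eulerPoly_succ n x)
    (Continuous.intervalIntegrable (by fun_prop) _ _)
    (Continuous.intervalIntegrable (by fun_prop) _ _)
  rw [eulerPoly_one_of_ne_zero m.succ_ne_zero, eulerPoly_one_of_ne_zero n.succ_ne_zero,
    neg_mul_neg, sub_self,
    integral_add (Continuous.intervalIntegrable (by fun_prop) _ _)
      (Continuous.intervalIntegrable (by fun_prop) _ _)] at h
  simp only [mul_assoc, mul_left_comm (eulerPoly (m + 1) _), integral_const_mul] at h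
  linarith

theorem integral_eulerPoly_mul_eulerPoly (m n : ℕ) :
    ∫ x in (0:ℝ)..1, eulerPoly m x * eulerPoly n x =
      2 * (-1 : ℝ) ^ (n + 1) * ((m.factorial : ℝ) * n.factorial / (m + n + 1).factorial) *
        eulerPoly (m + n + 1) 0 := by
  induction n generalizing m with
  | zero =>
    simp only [eulerPoly_zero, mul_one, integral_eulerPoly, Nat.factorial_succ]
    push_cast
    field_simp
    ring
  | succ n ih =>
    have h := integral_eulerPoly_mul_eulerPoly_succ m n
    rw [ih, show m + 1 + n + 1 = m + (n + 1) + 1 by omega] at h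
    have hm : (m : ℝ) + 1 ≠ 0 := by positivity
    rw [← mul_right_inj' hm, h, Nat.factorial_succ m, Nat.factorial_succ n]
    push_cast
    ring
end

section
/- For every positive integer m, ∫_0^1 sec(πx) E_{2m-1}(x) dx = (-1)^m (4(2m-1)!/π^{2m}) β(2m), where β(s) = ∑_{n=0}^∞ (-1)^n/(2n+1)^s is the Dirichlet beta function. -/
/-!
Expanding `E_{2m-1}` in its Fourier series (the difference of those of `B_{2m}((x+1)/2)` and
`B_{2m}(x/2)`) gives `E_{2m-1}(x) = c ∑ₖ cos((2k+1)πx) / (2k+1)^{2m}` with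
`c = (-1)^m 4 (2m-1)! / π^{2m}`. The quotient `D_k(θ) = cos((2k+1)θ) / cos θ` is the trigonometric
polynomial `(-1)^k + 2 ∑_{j=1}^k (-1)^{k-j} cos(2jθ)`, so `∫₀¹ D_k(πx) dx = (-1)^k` and termwise
integration yields `c β(2m)`. The bound `|D_k| ≤ 2k+1` alone does not dominate the series when
`m = 1`; grouping the terms in pairs,
`a D_{2j} + b D_{2j+1} = (a - b) D_{2j} + 2b cos((4j+2)θ)`, gives terms of size `O(1/j²)`,
and dominated convergence applies.
-/

open Real MeasureTheory Set
open scoped Interval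

/-- The Dirichlet beta function `β(s) = ∑_{n=0}^∞ (-1)^n/(2n+1)^s` (here at integer
arguments). -/
noncomputable def dirichletBeta (s : ℕ) : ℝ := ∑' n : ℕ, (-1 : ℝ) ^ n / (2 * n + 1) ^ s

noncomputable def cosOddDivCos : ℕ → ℝ → ℝ
  | 0, _ => 1
  | k + 1, θ => 2 * cos (2 * (k + 1) * θ) - cosOddDivCos k θ

lemma cos_mul_cosOddDivCos (k : ℕ) (θ : ℝ) :
    cos θ * cosOddDivCos k θ = cos ((2 * k + 1) * θ) := by
  induction k with
  | zero => simp [cosOddDivCos]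
  | succ k ih =>
    have h₁ : (2 * ((k + 1 : ℕ) : ℝ) + 1) * θ = 2 * (k + 1) * θ + θ := by push_cast; ring
    have h₂ : (2 * (k : ℝ) + 1) * θ = 2 * (k + 1) * θ - θ := by ring
    rw [cosOddDivCos, mul_sub, ih, h₁, h₂, cos_add, cos_sub]
    ring

lemma abs_cosOddDivCos_le (k : ℕ) (θ : ℝ) : |cosOddDivCos k θ| ≤ 2 * k + 1 := by
  induction k with
  | zero => simp [cosOddDivCos]
  | succ k ih =>
    calc |cosOddDivCos (k + 1) θ| ≤ |2 * cos (2 * (k + 1) * θ)| + |cosOddDivCos k θ| :=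
          abs_sub _ _
      _ ≤ 2 + (2 * k + 1) := by
          rw [abs_mul, abs_two]
          gcongr
          · linarith [abs_cos_le_one (2 * (k + 1) * θ)]
      _ = 2 * ((k + 1 : ℕ) : ℝ) + 1 := by push_cast; ring

@[fun_prop]
lemma continuous_cosOddDivCos (k : ℕ) : Continuous (cosOddDivCos k) := by
  induction k with
  | zero => exact continuous_const
  | succ k ih => exact (continuous_const.mul (continuous_cos.comp (continuous_const_mul _))).sub ih

lemma integral_cos_two_mul_nat_mul_pi_mul (n : ℕ) (hn : n ≠ 0) :
    ∫ x in (0 : ℝ)..1, cos (2 * n * (π * x)) = 0 := by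
  have h : (2 * n * π : ℝ) ≠ 0 := by positivity
  simp_rw [← mul_assoc]
  rw [intervalIntegral.integral_comp_mul_left cos h, integral_cos, mul_one, mul_zero, sin_zero,
    sub_zero, show (2 * n * π : ℝ) = (2 * n : ℕ) * π by push_cast; ring, sin_nat_mul_pi, smul_zero]

lemma integral_cosOddDivCos (k : ℕ) : ∫ x in (0 : ℝ)..1, cosOddDivCos k (π * x) = (-1) ^ k := by
  induction k with
  | zero => simp [cosOddDivCos]
  | succ k ih =>
    have hcos := integral_cos_two_mul_nat_mul_pi_mul (k + 1) k.succ_ne_zero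
    push_cast at hcos
    simp only [cosOddDivCos]
    rw [intervalIntegral.integral_sub, intervalIntegral.integral_const_mul, hcos, ih]
    · ring
    all_goals exact Continuous.intervalIntegrable (by fun_prop) _ _

theorem HasSum.add_pairs {α : Type*} [AddCommMonoid α] [TopologicalSpace α] [ContinuousAdd α]
    [T3Space α] {f : ℕ → α} {a : α} (h : HasSum f a) :
    HasSum (fun j ↦ f (2 * j) + f (2 * j + 1)) a := by
  refine ((Nat.divModEquiv 2).symm.hasSum_iff.mpr h).prod_fiberwise fun j ↦ ?_
  simpa [Fin.sum_univ_two, mul_comm] using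
    hasSum_fintype fun i : Fin 2 ↦ f ((Nat.divModEquiv 2).symm (j, i))

lemma summable_one_div_nat_mul_add_one_pow {c : ℕ} (hc : c ≠ 0) {p : ℕ} (hp : 1 < p) :
    Summable fun k : ℕ ↦ 1 / (c * k + 1 : ℝ) ^ p := by
  have h := (Real.summable_one_div_nat_pow.mpr hp).comp_injective
    (i := fun k : ℕ ↦ c * k + 1) fun a b hab ↦ by simpa [hc] using hab
  simpa [Function.comp_def] using h

lemma hasSum_dirichletBeta_pairs {p : ℕ} (hp : 1 < p) :
    HasSum (fun j : ℕ ↦ 1 / (4 * j + 1 : ℝ) ^ p - 1 / (4 * j + 3) ^ p) (dirichletBeta p) := by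
  have hs : Summable fun n : ℕ ↦ (-1 : ℝ) ^ n / (2 * n + 1) ^ p :=
    (summable_one_div_nat_mul_add_one_pow two_ne_zero hp).of_norm_bounded fun n ↦ by
      simp [abs_of_nonneg (by positivity : (0 : ℝ) ≤ 2 * n + 1)]
  refine hs.hasSum.add_pairs.congr_fun fun j ↦ ?_
  push_cast
  rw [pow_succ, pow_mul]
  ring_nf

lemma one_div_pow_sub_one_div_pow_le {A B : ℝ} (hA : 0 < A) (hAB : A ≤ B) (p : ℕ) :
    1 / A ^ p - 1 / B ^ p ≤ p * (B - A) / (A ^ p * B) := by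
  have hB : 0 < B := hA.trans_le hAB
  have h := one_add_mul_le_pow (a := (A - B) / B) (by rw [le_div_iff₀ hB]; linarith) p
  rw [show 1 + (A - B) / B = A / B by field_simp; ring, div_pow, le_div_iff₀ (by positivity)] at h
  have h' : (B + p * (A - B)) * B ^ p ≤ A ^ p * B := by
    calc (B + p * (A - B)) * B ^ p = (1 + p * ((A - B) / B)) * B ^ p * B := by field_simp
      _ ≤ A ^ p * B := by gcongr
  rw [div_sub_div _ _ (by positivity) (by positivity),
    div_le_div_iff₀ (by positivity) (by positivity)]
  nlinarith [mul_le_mul_of_nonneg_left h' (pow_pos hA p).le]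

noncomputable def pairedKernel (p j : ℕ) (θ : ℝ) : ℝ :=
  1 / (4 * j + 1 : ℝ) ^ p * cosOddDivCos (2 * j) θ +
    1 / (4 * j + 3 : ℝ) ^ p * cosOddDivCos (2 * j + 1) θ

noncomputable def pairedKernelBound (p j : ℕ) : ℝ :=
  (1 / (4 * j + 1 : ℝ) ^ p - 1 / (4 * j + 3) ^ p) * (4 * j + 1) + 2 / (4 * j + 3 : ℝ) ^ p

lemma hasSum_pairedKernel {p : ℕ} {θ s : ℝ} (hθ : cos θ ≠ 0)
    (h : HasSum (fun k : ℕ ↦ 1 / (2 * k + 1 : ℝ) ^ p * cos ((2 * k + 1) * θ)) s) :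
    HasSum (fun j ↦ pairedKernel p j θ) (s / cos θ) := by
  refine (h.div_const (cos θ)).add_pairs.congr_fun fun j ↦ ?_
  simp only [pairedKernel, ← cos_mul_cosOddDivCos]
  field_simp
  push_cast
  ring

lemma integral_pairedKernel (p j : ℕ) :
    ∫ x in (0 : ℝ)..1, pairedKernel p j (π * x) =
      1 / (4 * j + 1 : ℝ) ^ p - 1 / (4 * j + 3) ^ p := by
  simp only [pairedKernel]
  rw [intervalIntegral.integral_add, intervalIntegral.integral_const_mul,
    intervalIntegral.integral_const_mul, integral_cosOddDivCos, integral_cosOddDivCos,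
    pow_succ, pow_mul]
  · norm_num
    ring
  all_goals exact Continuous.intervalIntegrable (by fun_prop) _ _

lemma abs_pairedKernel_le (p j : ℕ) (θ : ℝ) : |pairedKernel p j θ| ≤ pairedKernelBound p j := by
  set a : ℝ := 1 / (4 * j + 1) ^ p
  set b : ℝ := 1 / (4 * j + 3) ^ p
  have hb : 0 ≤ b := by positivity
  have hba : b ≤ a := one_div_le_one_div_of_le (by positivity) (by gcongr; linarith)
  have hsplit : pairedKernel p j θ =
      (a - b) * cosOddDivCos (2 * j) θ + b * (2 * cos (2 * (2 * j + 1 : ℕ) * θ)) := by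
    simp only [pairedKernel, cosOddDivCos]
    push_cast
    ring
  have hS := abs_cosOddDivCos_le (2 * j) θ
  push_cast at hS
  rw [hsplit, pairedKernelBound]
  calc _ ≤ |(a - b) * cosOddDivCos (2 * j) θ| + |b * (2 * cos (2 * (2 * j + 1 : ℕ) * θ))| :=
        abs_add_le _ _
    _ ≤ (a - b) * (4 * j + 1) + b * 2 := by
        rw [abs_mul, abs_mul, abs_mul, abs_two, abs_of_nonneg (sub_nonneg.2 hba), abs_of_nonneg hb]
        gcongr
        · linarith
        · linarith [abs_cos_le_one (2 * (2 * j + 1 : ℕ) * θ)]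
    _ = _ := by ring

lemma pairedKernelBound_nonneg (p j : ℕ) : 0 ≤ pairedKernelBound p j := by
  have hab : 1 / (4 * j + 3 : ℝ) ^ p ≤ 1 / (4 * j + 1) ^ p :=
    one_div_le_one_div_of_le (by positivity) (by gcongr; linarith)
  have := sub_nonneg.2 hab
  rw [pairedKernelBound]
  positivity

lemma pairedKernelBound_le {p : ℕ} (hp : 2 ≤ p) (j : ℕ) :
    pairedKernelBound p j ≤ 2 * p * (1 / (4 * j + 1 : ℝ) ^ 2) + 2 * (1 / (4 * j + 1) ^ p) := by
  set A : ℝ := 4 * j + 1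
  have hA : 1 ≤ A := by simp [A]
  have hAB : A ≤ 4 * j + 3 := by linarith
  have hdiff := one_div_pow_sub_one_div_pow_le (by positivity) hAB p
  rw [show (4 * j + 3 : ℝ) - A = 2 by ring] at hdiff
  have hpow : A ^ 2 * A ≤ A ^ p * (4 * j + 3) :=
    mul_le_mul (pow_le_pow_right₀ hA hp) hAB (by positivity) (by positivity)
  rw [pairedKernelBound]
  gcongr ?_ + ?_
  · calc (1 / A ^ p - 1 / (4 * j + 3 : ℝ) ^ p) * A ≤ p * 2 / (A ^ p * (4 * j + 3)) * A := by
          gcongr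
      _ = 2 * p * (A / (A ^ p * (4 * j + 3))) := by ring
      _ ≤ 2 * p * (1 / A ^ 2) := by
          refine mul_le_mul_of_nonneg_left ?_ (by positivity)
          rw [div_le_div_iff₀ (by positivity) (by positivity)]
          linarith
  · rw [div_eq_mul_one_div]
    gcongr

lemma summable_pairedKernelBound {p : ℕ} (hp : 2 ≤ p) : Summable (pairedKernelBound p) := by
  have hsum₂ : Summable fun j : ℕ ↦ 1 / (4 * j + 1 : ℝ) ^ 2 := by
    exact_mod_cast summable_one_div_nat_mul_add_one_pow (c := 4) four_ne_zero one_lt_two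
  have hsumₚ : Summable fun j : ℕ ↦ 1 / (4 * j + 1 : ℝ) ^ p := by
    exact_mod_cast summable_one_div_nat_mul_add_one_pow (c := 4) four_ne_zero (by omega)
  have hdom : Summable fun j : ℕ ↦ 2 * p * (1 / (4 * j + 1 : ℝ) ^ 2) + 2 * (1 / (4 * j + 1) ^ p) :=
    (hsum₂.mul_left _).add (hsumₚ.mul_left 2)
  exact hdom.of_nonneg_of_le (pairedKernelBound_nonneg p) (pairedKernelBound_le hp)

lemma integral_eq_dirichletBeta_of_hasSum_pairedKernel {p : ℕ} (hp : 2 ≤ p) {f : ℝ → ℝ}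
    (hf : ∀ᵐ x, x ∈ Ι (0 : ℝ) 1 → HasSum (fun j ↦ pairedKernel p j (π * x)) (f x)) :
    ∫ x in (0 : ℝ)..1, f x = dirichletBeta p := by
  have h := intervalIntegral.hasSum_integral_of_dominated_convergence
    (fun j _ ↦ pairedKernelBound p j)
    (fun j ↦ (Continuous.aestronglyMeasurable (by unfold pairedKernel; fun_prop)))
    (fun j ↦ ae_of_all _ fun x _ ↦ abs_pairedKernel_le p j (π * x))
    (ae_of_all _ fun _ _ ↦ summable_pairedKernelBound hp) intervalIntegrable_const hf
  simp only [integral_pairedKernel] at h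
  exact h.unique (hasSum_dirichletBeta_pairs (by omega))

lemma hasSum_eulerPoly_fourier {m : ℕ} (hm : m ≠ 0) {x : ℝ} (hx : x ∈ Icc (0 : ℝ) 1) :
    HasSum (fun k : ℕ ↦ (-1 : ℝ) ^ m * (4 * (2 * m - 1).factorial / π ^ (2 * m)) *
        (1 / (2 * k + 1 : ℝ) ^ (2 * m) * cos ((2 * k + 1) * (π * x))))
      (eulerPoly (2 * m - 1) x) := by
  have hx₁ : (x + 1) / 2 ∈ Icc (0 : ℝ) 1 := ⟨by linarith [hx.1], by linarith [hx.2]⟩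
  have hx₂ : x / 2 ∈ Icc (0 : ℝ) 1 := ⟨by linarith [hx.1], by linarith [hx.2]⟩
  have h := ((hasSum_one_div_nat_pow_mul_cos hm hx₁).sub
    (hasSum_one_div_nat_pow_mul_cos hm hx₂)).add_pairs.mul_left
    (-(-1) ^ m * (2 * (2 * m - 1).factorial / π ^ (2 * m)))
  -- the even terms of the difference cancel, the odd ones are twice the terms of the claim
  convert! h using 1
  · ext k
    have heven :
        cos (2 * π * (2 * k : ℕ) * ((x + 1) / 2)) = cos (2 * π * (2 * k : ℕ) * (x / 2)) := by
      rw [show 2 * π * ((2 * k : ℕ) : ℝ) * ((x + 1) / 2) =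
        2 * π * (2 * k : ℕ) * (x / 2) + k * (2 * π) by push_cast; ring, cos_add_nat_mul_two_pi]
    have hodd : cos (2 * π * (2 * k + 1 : ℕ) * ((x + 1) / 2)) = -cos ((2 * k + 1) * (π * x)) := by
      rw [show 2 * π * ((2 * k + 1 : ℕ) : ℝ) * ((x + 1) / 2) =
        (2 * k + 1) * (π * x) + π + k * (2 * π) by push_cast; ring, cos_add_nat_mul_two_pi,
        cos_add_pi]
    rw [heven, hodd, show 2 * π * ((2 * k + 1 : ℕ) : ℝ) * (x / 2) = (2 * k + 1) * (π * x) by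
      push_cast; ring]
    push_cast
    ring
  · have hcast : ((2 * m - 1 : ℕ) : ℝ) + 1 = 2 * m := by
      rw [← Nat.cast_add_one, Nat.sub_add_cancel (by omega)]
      push_cast
      ring
    have hsign : (-1 : ℝ) ^ m * (-1) ^ (m + 1) = -1 := by
      rw [← pow_add]
      exact Odd.neg_one_pow ⟨m, by ring⟩
    simp only [eulerPoly, Nat.sub_add_cancel (show 1 ≤ 2 * m by omega), hcast]
    rw [← Nat.mul_factorial_pred (show 2 * m ≠ 0 by omega)]
    push_cast
    field_simp
    rw [mul_assoc _ ((-1) ^ m), hsign, mul_pow]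
    ring

lemma cos_pi_mul_ne_zero {x : ℝ} (hx : x ∈ Icc (0 : ℝ) 1) (hx' : x ≠ 1 / 2) : cos (π * x) ≠ 0 := by
  intro h
  refine hx' (mul_left_cancel₀ pi_ne_zero ?_)
  refine injOn_cos ⟨by have := hx.1; positivity, ?_⟩ ⟨by positivity, by linarith [pi_pos]⟩
    (h.trans cos_pi_div_two.symm) |>.trans (by ring)
  nlinarith [pi_pos, hx.2]

theorem integral_sec_mul_eulerPoly (m : ℕ) (hm : 0 < m) :
    ∫ x in (0:ℝ)..1, (1 / Real.cos (Real.pi * x)) * eulerPoly (2 * m - 1) x =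
      (-1 : ℝ) ^ m * (4 * (2 * m - 1).factorial / Real.pi ^ (2 * m)) *
        dirichletBeta (2 * m) := by
  set c : ℝ := (-1) ^ m * (4 * (2 * m - 1).factorial / π ^ (2 * m)) with hc_def
  have hc : c ≠ 0 := mul_ne_zero (by simp) (by positivity)
  have hsum : ∀ᵐ x, x ∈ Ι (0 : ℝ) 1 → HasSum (fun j ↦ pairedKernel (2 * m) j (π * x))
      (c⁻¹ * eulerPoly (2 * m - 1) x / cos (π * x)) := by
    filter_upwards [volume.ae_ne (1 / 2)] with x hx' hx
    rw [uIoc_of_le zero_le_one] at hx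
    refine hasSum_pairedKernel (cos_pi_mul_ne_zero (Ioc_subset_Icc_self hx) hx') ?_
    have h := (hasSum_eulerPoly_fourier hm.ne' (Ioc_subset_Icc_self hx)).mul_left c⁻¹
    simpa only [← hc_def, inv_mul_cancel_left₀ hc] using h
  calc ∫ x in (0 : ℝ)..1, 1 / cos (π * x) * eulerPoly (2 * m - 1) x
      = ∫ x in (0 : ℝ)..1, c * (c⁻¹ * eulerPoly (2 * m - 1) x / cos (π * x)) := by
        congr 1 with x
        field_simp
    _ = c * dirichletBeta (2 * m) := by
        rw [intervalIntegral.integral_const_mul,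
          integral_eq_dirichletBeta_of_hasSum_pairedKernel (by omega) hsum]
end
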